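/- Let n = d_A·d_B with d_A, d_B ≥ 1, and suppose integers b₁ ≤ … ≤ b_{d_A}, c₁ ≤ … ≤ c_{d_B} and t are such that the multiset {bᵢ + cⱼ + t} equals the multiset consisting of 0 with multiplicity n−1 and 1 with multiplicity 1. If both d_A ≥ 2 and d_B ≥ 2 then no such decomposition exists. -/

import Mathlib

/-- The multiset `{0^{n-1}, 1}` (with `n = d_A d_B`) admits no bipartite additive
decomposition `{bᵢ + cⱼ + t}` when both `d_A ≥ 2` and `d_B ≥ 2`. -/
theorem no_additive_decomposition (dA dB : ℕ) (hA : 2 ≤ dA) (hB : 2 ≤ dB) :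
    ¬ ∃ (b : Fin dA → ℤ) (c : Fin dB → ℤ) (t : ℤ), Monotone b ∧ Monotone c ∧
      Multiset.map (fun ij : Fin dA × Fin dB => b ij.1 + c ij.2 + t)
          (Finset.univ : Finset (Fin dA × Fin dB)).val =
        Multiset.replicate (dA * dB - 1) (0 : ℤ) + {1} := by
  rintro ⟨b, c, t, hb, hc, heq⟩
  set f : Fin dA × Fin dB → ℤ := fun ij => b ij.1 + c ij.2 + t with hf
  -- every value is 0 or 1
  have h01 : ∀ p : Fin dA × Fin dB, f p = 0 ∨ f p = 1 := by
    intro p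
    have hm : f p ∈ Multiset.replicate (dA * dB - 1) (0 : ℤ) + {1} := by
      rw [← heq]
      exact Multiset.mem_map_of_mem _ (by simp)
    rcases Multiset.mem_add.1 hm with h | h
    · exact Or.inl (Multiset.eq_of_mem_replicate h)
    · exact Or.inr (by simpa using h)
  have hcount : Multiset.count (1 : ℤ) (Multiset.map f Finset.univ.val) = 1 := by
    rw [heq]
    simp [Multiset.count_replicate]
  have huniq : ∀ p q : Fin dA × Fin dB, f p = 1 → f q = 1 → p = q := by
    intro p q hp hq
    by_contra hne
    have hle : ({p, q} : Finset (Fin dA × Fin dB)).val ≤ Finset.univ.val :=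
      Finset.val_le_iff.2 (Finset.subset_univ _)
    have h2 : Multiset.count (1 : ℤ) (Multiset.map f ({p, q} : Finset (Fin dA × Fin dB)).val) ≤ 1 := by
      rw [← hcount]
      exact Multiset.count_le_of_le _ (Multiset.map_le_map hle)
    have hval : ({p, q} : Finset (Fin dA × Fin dB)).val = p ::ₘ {q} := by
      rw [Finset.insert_val, Multiset.ndinsert_of_notMem (by simpa using hne)]
      rfl
    rw [hval] at h2
    simp [hp, hq] at h2
  have hdA1 : dA - 1 < dA := by omega
  have hdA2 : dA - 2 < dA := by omega
  have hdB1 : dB - 1 < dB := by omega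
  have hdB2 : dB - 2 < dB := by omega
  set i1 : Fin dA := ⟨dA - 1, hdA1⟩
  set i0 : Fin dA := ⟨dA - 2, hdA2⟩
  set j1 : Fin dB := ⟨dB - 1, hdB1⟩
  set j0 : Fin dB := ⟨dB - 2, hdB2⟩
  have hbi : ∀ i : Fin dA, b i ≤ b i1 := fun i => hb (Fin.le_def.2 (by show (i : ℕ) ≤ dA - 1; omega))
  have hcj : ∀ j : Fin dB, c j ≤ c j1 := fun j => hc (Fin.le_def.2 (by show (j : ℕ) ≤ dB - 1; omega))
  -- 1 is attained
  have h1mem : (1 : ℤ) ∈ Multiset.map f Finset.univ.val := by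
    rw [heq]; simp
  obtain ⟨p0, -, hp0⟩ := Multiset.mem_map.1 h1mem
  have hmax : f (i1, j1) = 1 := by
    rcases h01 (i1, j1) with h | h
    · exfalso
      have hle1 : f p0 ≤ f (i1, j1) := by
        simp only [hf]
        have := hbi p0.1
        have := hcj p0.2
        omega
      rw [hp0, h] at hle1
      omega
    · exact h
  have hne01 : i0 ≠ i1 := by
    simp only [i0, i1, Fin.mk.injEq, ne_eq]
    omega
  have hneJ : j0 ≠ j1 := by
    simp only [j0, j1, Fin.mk.injEq, ne_eq]
    omega
  have hA0 : f (i0, j1) = 0 := by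
    rcases h01 (i0, j1) with h | h
    · exact h
    · exact absurd (congrArg Prod.fst (huniq _ _ h hmax)) hne01
  have hB0 : f (i1, j0) = 0 := by
    rcases h01 (i1, j0) with h | h
    · exact h
    · exact absurd (congrArg Prod.snd (huniq _ _ h hmax)) hneJ
  have h00 := h01 (i0, j0)
  simp only [hf] at hmax hA0 hB0 h00
  omega
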